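/- Let z = (z_1, …, z_N) be a crystal. Then for every h = (h_1, …, h_N) ∈ (ℝ^d)^N, the second derivative of H along h at z satisfies (d²/dt²) H(z + t h)|_{t=0} = (č/a²) Σ_{⟨i,j⟩} ⟨h_i − h_j, z_i − z_j⟩², where the sum is over neighboring pairs; in particular this quadratic form is nonnegative. -/

import Mathlib

open Matrix

/-- The action of a `d × d` real matrix on `ℝ^d` (Euclidean space). -/
noncomputable def matAct {d : ℕ} (X : Matrix (Fin d) (Fin d) ℝ)
    (v : EuclideanSpace ℝ (Fin d)) : EuclideanSpace ℝ (Fin d) :=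
  Matrix.toEuclideanLin X v

/-- `z` is a crystal: distinct particles are either at distance exactly `a`
(neighboring pairs) or at distance `> b`. -/
def IsCrystal {d N : ℕ} (a b : ℝ) (z : Fin N → EuclideanSpace ℝ (Fin d)) : Prop :=
  ∀ i j : Fin N, i ≠ j → ‖z i - z j‖ = a ∨ b < ‖z i - z j‖

/-- The quadratic form ℰ₁(h) = (č/a²) Σ_{⟨i,j⟩} ⟨h_i − h_j, z_i − z_j⟩², the sum being
over neighboring pairs. -/
noncomputable def E1form {d N : ℕ} (a c : ℝ) (z h : Fin N → EuclideanSpace ℝ (Fin d)) : ℝ :=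
  (c / a ^ 2) * ∑ i : Fin N, ∑ j : Fin N,
    if i < j ∧ ‖z i - z j‖ = a then (inner ℝ (h i - h j) (z i - z j) : ℝ) ^ 2 else 0

/-- ℰ₂(h) = (č²/a⁴) Σ_i |Σ_{j : ⟨i,j⟩} ⟨h_i − h_j, z_i − z_j⟩ (z_i − z_j)|². -/
noncomputable def E2form {d N : ℕ} (a c : ℝ) (z h : Fin N → EuclideanSpace ℝ (Fin d)) : ℝ :=
  (c ^ 2 / a ^ 4) * ∑ i : Fin N,
    ‖∑ j : Fin N, if i ≠ j ∧ ‖z i - z j‖ = a then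
        (inner ℝ (h i - h j) (z i - z j) : ℝ) • (z i - z j) else 0‖ ^ 2

/-- ‖∇h‖₂² = Σ_{⟨i,j⟩} |h_i − h_j|² (sum over neighboring pairs). -/
noncomputable def gradSq {d N : ℕ} (a : ℝ) (z h : Fin N → EuclideanSpace ℝ (Fin d)) : ℝ :=
  ∑ i : Fin N, ∑ j : Fin N, if i < j ∧ ‖z i - z j‖ = a then ‖h i - h j‖ ^ 2 else 0

/-- Membership in H_z = {(X z_i + v)_i : X ∈ so(d), v ∈ ℝ^d}. -/
def InHz {d N : ℕ} (z h : Fin N → EuclideanSpace ℝ (Fin d)) : Prop :=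
  ∃ X : Matrix (Fin d) (Fin d) ℝ, Xᵀ = -X ∧
    ∃ v : EuclideanSpace ℝ (Fin d), ∀ i, h i = matAct X (z i) + v

/-- Membership in H_z^⊥, the orthogonal complement of H_z for the inner product
⟨h, h'⟩ = Σ_i ⟨h_i, h'_i⟩. -/
def InHzPerp {d N : ℕ} (z h : Fin N → EuclideanSpace ℝ (Fin d)) : Prop :=
  ∀ g : Fin N → EuclideanSpace ℝ (Fin d), InHz z g →
    ∑ i : Fin N, (inner ℝ (h i) (g i) : ℝ) = 0

/-- The crystal `z` is infinitesimally rigid: ℰ₁(h) = 0 holds exactly for h ∈ H_z. -/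
def InfRigid {d N : ℕ} (a b c : ℝ) (z : Fin N → EuclideanSpace ℝ (Fin d)) : Prop :=
  IsCrystal a b z ∧ ∀ h : Fin N → EuclideanSpace ℝ (Fin d), E1form a c z h = 0 ↔ InHz z h

/-- The Hamiltonian H(x) = Σ_{1≤i<j≤N} U(|x_i − x_j|). -/
noncomputable def Ham {d N : ℕ} (U : ℝ → ℝ) (x : Fin N → EuclideanSpace ℝ (Fin d)) : ℝ :=
  ∑ i : Fin N, ∑ j : Fin N, if i < j then U ‖x i - x j‖ else 0

/-!
Along the line `t ↦ z + t • h` the pair `i < j` contributes `U ‖w + t • u‖` with `w = z i - z j`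
and `u = h i - h j`. A distant pair has `‖w‖ > b`, beyond the range of `U`, so its contribution
vanishes near `t = 0`. For a neighboring pair the chain rule gives `U''(a) r'(0)² + U'(a) r''(0)`
with `r t = ‖w + t • u‖`; as `a` minimises `U` on `[0, ∞)`, `U'(a) = 0`, and `r'(0) = ⟪u, w⟫ / a`.
-/

open Filter Topology
open scoped RealInnerProductSpace

theorem iteratedDeriv_fun_sum_apply {𝕜 F ι : Type*} [NontriviallyNormedField 𝕜]
    [NormedAddCommGroup F] [NormedSpace 𝕜 F] {f : ι → 𝕜 → F} {u : Finset ι} {n : ℕ} {x : 𝕜}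
    (h : ∀ j ∈ u, ContDiffAt 𝕜 n (f j) x) :
    iteratedDeriv n (fun t => ∑ j ∈ u, f j t) x = ∑ j ∈ u, iteratedDeriv n (f j) x := by
  simp [iteratedDeriv_eq_iteratedFDeriv, iteratedFDeriv_fun_sum_apply h]

theorem iteratedDeriv_two_comp {U r : ℝ → ℝ} {x : ℝ} (hU : ContDiff ℝ 2 U)
    (hr : ContDiffAt ℝ 2 r x) :
    iteratedDeriv 2 (U ∘ r) x =
      deriv (deriv U) (r x) * deriv r x ^ 2 + deriv U (r x) * iteratedDeriv 2 r x := by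
  have hr_diff : ∀ᶠ y in 𝓝 x, DifferentiableAt ℝ r y :=
    (hr.eventually (by simp)).mono fun y hy => hy.differentiableAt (by norm_num)
  have hderiv : deriv (U ∘ r) =ᶠ[𝓝 x] fun y => deriv U (r y) * deriv r y :=
    hr_diff.mono fun y hy => deriv_comp y (hU.differentiable (by norm_num) _) hy
  have hU' : HasDerivAt (fun y => deriv U (r y)) (deriv (deriv U) (r x) * deriv r x) x :=
    (hU.differentiable_deriv_two (r x)).hasDerivAt.comp x
      (hr.differentiableAt (by norm_num)).hasDerivAt
  have hr' : HasDerivAt (deriv r) (iteratedDeriv 2 r x) x := by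
    rw [iteratedDeriv_succ, iteratedDeriv_one]
    exact ((hr.derivWithin (m := 1) (by norm_num)).differentiableAt one_ne_zero).hasDerivAt
  rw [iteratedDeriv_succ, iteratedDeriv_one, hderiv.deriv_eq, (hU'.fun_mul hr').deriv]
  ring

section InnerProductSpace

variable {E : Type*} [NormedAddCommGroup E] [InnerProductSpace ℝ E]

theorem HasDerivAt.norm {f : ℝ → E} {f' : E} {t : ℝ} (hf : HasDerivAt f f' t) (h0 : f t ≠ 0) :
    HasDerivAt (fun s => ‖f s‖) (⟪f t, f'⟫ / ‖f t‖) t := by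
  have hsqrt := hf.norm_sq.sqrt (by positivity)
  simp only [Real.sqrt_sq (norm_nonneg _)] at hsqrt
  convert hsqrt using 1
  field_simp

theorem iteratedDeriv_two_comp_norm_add_smul {U : ℝ → ℝ} (hU : ContDiff ℝ 2 U) {w : E}
    (hw : w ≠ 0) (hU' : deriv U ‖w‖ = 0) (u : E) :
    iteratedDeriv 2 (fun t : ℝ => U ‖w + t • u‖) 0 = deriv (deriv U) ‖w‖ * (⟪u, w⟫ / ‖w‖) ^ 2 := by
  have hline : HasDerivAt (fun t : ℝ => w + t • u) u 0 := by
    simpa using ((hasDerivAt_id (0 : ℝ)).smul_const u).const_add w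
  have hr : ContDiffAt ℝ 2 (fun t : ℝ => ‖w + t • u‖) 0 :=
    ContDiffAt.norm ℝ (by fun_prop) (by simpa using hw)
  have hr' : deriv (fun t : ℝ => ‖w + t • u‖) 0 = ⟪u, w⟫ / ‖w‖ := by
    simpa [real_inner_comm] using (hline.norm (by simpa using hw)).deriv
  refine (iteratedDeriv_two_comp hU hr).trans ?_
  simp [hr', hU']

theorem comp_norm_add_smul_eventuallyEq_zero {U : ℝ → ℝ} {b : ℝ} (hUb : ∀ s, b < s → U s = 0)
    {w : E} (hw : b < ‖w‖) (u : E) :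
    (fun t : ℝ => U ‖w + t • u‖) =ᶠ[𝓝 0] fun _ => 0 := by
  have hcont : Continuous fun t : ℝ => ‖w + t • u‖ := by fun_prop
  filter_upwards [(hcont.tendsto 0).eventually (lt_mem_nhds (by simpa using hw))] with t ht
  exact hUb _ ht

theorem contDiffAt_and_iteratedDeriv_two_comp_norm_add_smul {U : ℝ → ℝ} {a b : ℝ}
    (hU : ContDiff ℝ 2 U) (ha : 0 < a) (hU'a : deriv U a = 0) (hUb : ∀ s, b < s → U s = 0) {w : E}
    (hw : ‖w‖ = a ∨ b < ‖w‖) (u : E) :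
    ContDiffAt ℝ 2 (fun t : ℝ => U ‖w + t • u‖) 0 ∧
      iteratedDeriv 2 (fun t : ℝ => U ‖w + t • u‖) 0 =
        deriv (deriv U) a / a ^ 2 * if ‖w‖ = a then ⟪u, w⟫ ^ 2 else 0 := by
  by_cases hwa : ‖w‖ = a
  · have hw0 : w ≠ 0 := norm_pos_iff.mp (hwa ▸ ha)
    refine ⟨hU.contDiffAt.comp 0 (ContDiffAt.norm ℝ (by fun_prop) (by simpa using hw0)), ?_⟩
    rw [iteratedDeriv_two_comp_norm_add_smul hU hw0 (hwa ▸ hU'a), if_pos hwa, hwa]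
    ring
  · have hzero := comp_norm_add_smul_eventuallyEq_zero hUb (hw.resolve_left hwa) u
    refine ⟨contDiffAt_const.congr_of_eventuallyEq hzero, ?_⟩
    rw [iteratedDeriv_succ, iteratedDeriv_one, hzero.deriv.deriv_eq, if_neg hwa]
    simp

end InnerProductSpace

theorem eq_zero_of_sInf_lt {U : ℝ → ℝ} (hU : HasCompactSupport U) {s : ℝ}
    (hs : sInf {r : ℝ | 0 < r ∧ ∀ s, r < s → U s = 0} < s) : U s = 0 := by
  obtain ⟨R, hR, hRU⟩ := hU.exists_pos_le_norm
  have hmem : R ∈ {r : ℝ | 0 < r ∧ ∀ s, r < s → U s = 0} :=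
    ⟨hR, fun s hs => hRU s (hs.le.trans (le_abs_self s))⟩
  obtain ⟨r, ⟨-, hr⟩, hrs⟩ := exists_lt_of_csInf_lt ⟨R, hmem⟩ hs
  exact hr s hrs

theorem E1form_nonneg {d N : ℕ} {a c : ℝ} (hc : 0 ≤ c)
    (z h : Fin N → EuclideanSpace ℝ (Fin d)) :
    0 ≤ E1form a c z h := by
  unfold E1form
  positivity

theorem Ham_add_smul {d N : ℕ} (U : ℝ → ℝ) (z h : Fin N → EuclideanSpace ℝ (Fin d)) (t : ℝ) :
    Ham U (fun i => z i + t • h i) =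
      ∑ i, ∑ j, if i < j then U ‖(z i - z j) + t • (h i - h j)‖ else 0 := by
  simp only [Ham, add_sub_add_comm, smul_sub]

theorem stmt6_general {d N : ℕ} (U : ℝ → ℝ) (a b c : ℝ)
    (hU : ContDiff ℝ 3 U) (hUsupp : HasCompactSupport U)
    (ha : 0 < a) (hmin : ∀ r, 0 ≤ r → U a ≤ U r)
    (hc : deriv (deriv U) a = c) (hcpos : 0 < c)
    (hb : b = sInf {r : ℝ | 0 < r ∧ ∀ s, r < s → U s = 0})
    (z h : Fin N → EuclideanSpace ℝ (Fin d)) (hz : IsCrystal a b z) :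
    iteratedDeriv 2 (fun t : ℝ => Ham U (fun i => z i + t • h i)) 0 = E1form a c z h ∧
      0 ≤ E1form a c z h := by
  have hU2 : ContDiff ℝ 2 U := hU.of_le (by norm_num)
  have hU'a : deriv U a = 0 :=
    IsLocalMin.deriv_eq_zero ((eventually_gt_nhds ha).mono fun r hr => hmin r hr.le)
  have hUb : ∀ s, b < s → U s = 0 := fun s hs => eq_zero_of_sInf_lt hUsupp (hb ▸ hs)
  have hpair : ∀ i j : Fin N,
      ContDiffAt ℝ 2 (fun t : ℝ => if i < j then U ‖z i - z j + t • (h i - h j)‖ else 0) 0 ∧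
        iteratedDeriv 2 (fun t : ℝ => if i < j then U ‖z i - z j + t • (h i - h j)‖ else 0) 0 =
          c / a ^ 2 * if i < j ∧ ‖z i - z j‖ = a then ⟪h i - h j, z i - z j⟫ ^ 2 else 0 := by
    intro i j
    by_cases hij : i < j
    · simpa only [hij, if_true, true_and, hc] using
        contDiffAt_and_iteratedDeriv_two_comp_norm_add_smul hU2 ha hU'a hUb (hz i j hij.ne)
          (h i - h j)
    · simp [hij, contDiffAt_const]
  refine ⟨?_, E1form_nonneg hcpos.le z h⟩
  simp_rw [Ham_add_smul]
  rw [iteratedDeriv_fun_sum_apply fun i _ => ContDiffAt.sum fun j _ => (hpair i j).1, E1form,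
    Finset.mul_sum]
  refine Finset.sum_congr rfl fun i _ => ?_
  rw [iteratedDeriv_fun_sum_apply fun j _ => (hpair i j).1, Finset.mul_sum]
  exact Finset.sum_congr rfl fun j _ => (hpair i j).2

theorem stmt6 {d N : ℕ} (U : ℝ → ℝ) (a b c : ℝ)
    (hU : ContDiff ℝ 3 U) (hUsupp : HasCompactSupport U) (hUeven : ∀ r, U (-r) = U r)
    (ha : 0 < a) (hmin : ∀ r, 0 ≤ r → U a ≤ U r)
    (huniq : ∀ r, 0 < r → (∀ s, 0 ≤ s → U r ≤ U s) → r = a)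
    (hc : deriv (deriv U) a = c) (hcpos : 0 < c)
    (hb : b = sInf {r : ℝ | 0 < r ∧ ∀ s, r < s → U s = 0})
    (z h : Fin N → EuclideanSpace ℝ (Fin d)) (hz : IsCrystal a b z) :
    iteratedDeriv 2 (fun t : ℝ => Ham U (fun i => z i + t • h i)) 0 = E1form a c z h ∧
      0 ≤ E1form a c z h :=
  stmt6_general U a b c hU hUsupp ha hmin hc hcpos hb z h hz
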